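/- arXiv:0711.0464 — 2 statements merged into one kernel-verified Lean document; each statement's English description precedes it below -/
import Mathlib

section
/- Let Q be an N×N anti-symmetric integer matrix of rank 2 such that no column of Q is the zero vector and every row of Q has sum 0. Then there exists a 2×N integer matrix B of rank 2 whose columns b_1,…,b_N are all nonzero and satisfy b_1+…+b_N = 0, such that Q = Bᵀ·J·B. (In other words, Q is the matrix of the Plücker form of a rank-2 subgroup L ⊆ ℤ^N, namely the row span of B, which is orthogonal to (1,…,1) and not contained in any standard coordinate hyperplane of ℤ^N.) -/
/-!
Choose an entry `d = Q p q ≠ 0` and put `w j = (Q p j, Q q j) ∈ ℤ²`. The `4 × 4` principal minors of a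
skew matrix are the squares of its Pfaffians, so rank `< 4` gives the Plücker relations
`d * Q j k = det (w j, w k)`. Writing the `w j` in terms of a generating pair `g₁, g₂` of the lattice
they span turns `det (w j, w k)` into `det (g₁, g₂)` times a `2 × 2` minor of the coordinate matrix, and
`d ∣ det (g₁, g₂)` because `d` divides `det` on the generators. Dividing by `d` gives an integral
factorisation `Q = Bᵀ J B`. For rank `Q = 2` the rows of `B` are independent, so `Q 𝟙 = 0` forces
`B 𝟙 = 0`, and a zero column of `B` would give a zero column of `Q`.
-/

open Matrix

/-- The 2×2 integer matrix `[[0,1],[-1,0]]`. -/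
def Jmat : Matrix (Fin 2) (Fin 2) ℤ := !![0, 1; -1, 0]

def symplecticForm : (Fin 2 → ℤ) →ₗ[ℤ] (Fin 2 → ℤ) →ₗ[ℤ] ℤ := Matrix.toLinearMap₂' ℤ Jmat

lemma Jmat_mulVec (v : Fin 2 → ℤ) : Jmat *ᵥ v = ![v 1, -v 0] := by
  ext i; fin_cases i <;> simp [Jmat, mulVec, dotProduct, Fin.sum_univ_two]

lemma symplecticForm_apply (u v : Fin 2 → ℤ) : symplecticForm u v = u 0 * v 1 - u 1 * v 0 := by
  rw [symplecticForm, toLinearMap₂'_apply', Jmat_mulVec, dotProduct, Fin.sum_univ_two]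
  simp [sub_eq_add_neg]

lemma transpose_mul_Jmat_mul_apply {n : Type*} [Fintype n] (B : Matrix (Fin 2) n ℤ) (i j : n) :
    (Bᵀ * Jmat * B) i j = symplecticForm (Bᵀ i) (Bᵀ j) := by
  rw [symplecticForm_apply]
  simp [Matrix.mul_apply, Fin.sum_univ_two, Jmat, sub_eq_add_neg, mul_comm, add_comm]

lemma Submodule.exists_forall_mem_eq_smul_add_smul (Λ : Submodule ℤ (Fin 2 → ℤ)) :
    ∃ g₁ ∈ Λ, ∃ g₂ ∈ Λ, ∀ x ∈ Λ, ∃ a b : ℤ, x = a • g₁ + b • g₂ := by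
  let π₀ : (Fin 2 → ℤ) →ₗ[ℤ] ℤ := LinearMap.proj 0
  let π₁ : (Fin 2 → ℤ) →ₗ[ℤ] ℤ := LinearMap.proj 1
  obtain ⟨a, ha⟩ := (IsPrincipalIdealRing.principal (Λ.map π₀)).principal
  obtain ⟨b, hb⟩ := (IsPrincipalIdealRing.principal ((Λ ⊓ LinearMap.ker π₀).map π₁)).principal
  obtain ⟨g₁, hg₁, hg₁a : g₁ 0 = a⟩ := Submodule.mem_map.mp (ha ▸ Submodule.mem_span_singleton_self a)
  obtain ⟨g₂, ⟨hg₂, hg₂0 : g₂ 0 = 0⟩, hg₂b : g₂ 1 = b⟩ :=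
    Submodule.mem_map.mp (hb ▸ Submodule.mem_span_singleton_self b)
  refine ⟨g₁, hg₁, g₂, hg₂, fun x hx => ?_⟩
  obtain ⟨s, hs : s * a = x 0⟩ :=
    Submodule.mem_span_singleton.mp (ha ▸ Submodule.mem_map_of_mem (f := π₀) hx)
  have hy : x - s • g₁ ∈ Λ ⊓ LinearMap.ker π₀ := by
    refine ⟨Λ.sub_mem hx (Λ.smul_mem s hg₁), ?_⟩
    simp [π₀, ← hs, ← hg₁a]
  obtain ⟨t, ht : t * b = x 1 - s * g₁ 1⟩ :=
    Submodule.mem_span_singleton.mp (hb ▸ Submodule.mem_map_of_mem (f := π₁) hy)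
  refine ⟨s, t, funext (Fin.forall_fin_two.mpr ⟨?_, ?_⟩)⟩
  · simp [← hs, ← hg₁a, hg₂0]
  · simp only [Pi.add_apply, Pi.smul_apply, smul_eq_mul, hg₂b]
    linarith

lemma LinearMap.dvd_apply_of_mem_span {R M ι : Type*} [CommRing R] [AddCommGroup M] [Module R M]
    (f : M →ₗ[R] M →ₗ[R] R) {w : ι → M} {d : R} (hw : ∀ j k, d ∣ f (w j) (w k)) {x y : M}
    (hx : x ∈ Submodule.span R (Set.range w)) (hy : y ∈ Submodule.span R (Set.range w)) :
    d ∣ f x y := by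
  have hxy := Submodule.apply_mem_map₂ f hx hy
  rw [Submodule.map₂_span_span] at hxy
  rw [← Ideal.mem_span_singleton]
  refine Submodule.span_le.mpr ?_ hxy
  rintro _ ⟨_, ⟨j, rfl⟩, _, ⟨k, rfl⟩, rfl⟩
  exact Ideal.mem_span_singleton.mpr (hw j k)

lemma exists_symplecticForm_eq_mul {ι : Type*} (w : ι → Fin 2 → ℤ) (d : ℤ)
    (hw : ∀ j k, d ∣ symplecticForm (w j) (w k)) :
    ∃ B : Matrix (Fin 2) ι ℤ, ∀ j k,
      symplecticForm (w j) (w k) = d * symplecticForm (Bᵀ j) (Bᵀ k) := by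
  obtain ⟨g₁, hg₁, g₂, hg₂, hgen⟩ :=
    (Submodule.span ℤ (Set.range w)).exists_forall_mem_eq_smul_add_smul
  choose a b hab using fun j => hgen (w j) (Submodule.subset_span ⟨j, rfl⟩)
  obtain ⟨c, hc⟩ := symplecticForm.dvd_apply_of_mem_span hw hg₁ hg₂
  refine ⟨Matrix.of ![c • a, b], fun j k => ?_⟩
  rw [symplecticForm_apply] at hc
  rw [hab j, hab k]
  simp only [symplecticForm_apply, transpose_apply, of_apply, cons_val_zero, cons_val_one,
    Pi.add_apply, Pi.smul_apply, smul_eq_mul]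
  linear_combination (a j * b k - a k * b j) * hc

lemma det_fin_four_of_transpose_eq_neg (M : Matrix (Fin 4) (Fin 4) ℤ) (hM : Mᵀ = -M) :
    M.det = (M 0 1 * M 2 3 - M 0 2 * M 1 3 + M 0 3 * M 1 2) ^ 2 := by
  have hs : ∀ i j, M j i = -M i j := fun i j => congrFun (congrFun hM i) j
  have hd : ∀ i, M i i = 0 := fun i => by linarith [hs i i]
  rw [det_succ_row_zero]
  simp [Fin.sum_univ_succ, det_fin_three, Fin.succAbove, hd, hs 0 1, hs 0 2, hs 0 3, hs 1 2, hs 1 3,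
    hs 2 3]
  ring

lemma pluecker_relation {n : Type*} [Fintype n] (Q : Matrix n n ℤ) (hskew : Qᵀ = -Q)
    (hrank : (Q.map (Int.cast : ℤ → ℚ)).rank < 4) (a b c d : n) :
    Q a b * Q c d - Q a c * Q b d + Q a d * Q b c = 0 := by
  let e : Fin 4 → n := ![a, b, c, d]
  have hdet : (Q.submatrix e e).det = 0 := by
    by_contra h
    have hfull := rank_of_det_ne_zero (A := (Q.submatrix e e).map (Int.cast : ℤ → ℚ))
      (by rwa [← Int.cast_det, Int.cast_ne_zero])
    have hle := (Q.map (Int.cast : ℤ → ℚ)).rank_submatrix_le e e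
    rw [← submatrix_map, Fintype.card_fin] at hfull
    omega
  have hskew' : (Q.submatrix e e)ᵀ = -Q.submatrix e e := by
    rw [transpose_submatrix, hskew]; rfl
  rw [det_fin_four_of_transpose_eq_neg _ hskew'] at hdet
  simpa [e] using pow_eq_zero_iff two_ne_zero |>.mp hdet

theorem exists_eq_transpose_mul_Jmat_mul {n : Type*} [Fintype n] (Q : Matrix n n ℤ)
    (hskew : Qᵀ = -Q) (hrank : (Q.map (Int.cast : ℤ → ℚ)).rank < 4) :
    ∃ B : Matrix (Fin 2) n ℤ, Q = Bᵀ * Jmat * B := by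
  by_cases hQ : Q = 0
  · exact ⟨0, by simp [hQ]⟩
  obtain ⟨p, q, hpq⟩ : ∃ p q, Q p q ≠ 0 := by
    by_contra! h
    exact hQ (Matrix.ext h)
  let w : n → Fin 2 → ℤ := fun j => ![Q p j, Q q j]
  have hw : ∀ j k, symplecticForm (w j) (w k) = Q p q * Q j k := fun j k => by
    simp only [symplecticForm_apply, w, Matrix.cons_val_zero, Matrix.cons_val_one]
    linear_combination -pluecker_relation Q hskew hrank p q j k
  obtain ⟨B, hB⟩ := exists_symplecticForm_eq_mul w (Q p q) fun j k => Dvd.intro _ (hw j k).symm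
  refine ⟨B, Matrix.ext fun j k => ?_⟩
  rw [transpose_mul_Jmat_mul_apply]
  exact mul_left_cancel₀ hpq ((hw j k).symm.trans (hB j k))

lemma eq_zero_of_vecMul_eq_zero {m n : Type*} [Fintype m] [Fintype n] {A : Matrix m n ℤ}
    (hA : (A.map (Int.cast : ℤ → ℚ)).rank = Fintype.card m) {x : m → ℤ} (hx : x ᵥ* A = 0) :
    x = 0 := by
  have hrows : LinearIndependent ℚ (A.map (Int.cast : ℤ → ℚ)).row := by
    rw [linearIndependent_iff_card_eq_finrank_span, ← hA, rank_eq_finrank_span_row]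
    rfl
  have hxq : ((Int.cast : ℤ → ℚ) ∘ x) ᵥ* A.map (Int.cast : ℤ → ℚ) = 0 := funext fun i => by
    simpa using (RingHom.map_vecMul (Int.castRingHom ℚ) A x i).symm.trans (by simp [hx])
  have := vecMul_injective_iff.mpr hrows (hxq.trans (zero_vecMul _).symm)
  funext i
  simpa using congrFun this i

lemma mulVec_eq_zero_of_transpose_mul_Jmat_mul_mulVec_eq_zero {n : Type*} [Fintype n]
    {B : Matrix (Fin 2) n ℤ} (hB : (B.map (Int.cast : ℤ → ℚ)).rank = 2) {v : n → ℤ}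
    (hv : (Bᵀ * Jmat * B) *ᵥ v = 0) : B *ᵥ v = 0 := by
  have hJ : Jmat *ᵥ (B *ᵥ v) = 0 := by
    refine eq_zero_of_vecMul_eq_zero (A := B) (by simpa using hB) ?_
    rwa [← mulVec_transpose, mulVec_mulVec, mulVec_mulVec]
  rw [Jmat_mulVec] at hJ
  exact funext (Fin.forall_fin_two.mpr ⟨by simpa using congrFun hJ 1, by simpa using congrFun hJ 0⟩)

/-- An `N×N` anti-symmetric integer matrix `Q` of rank 2 with no zero
column and all row sums `0` equals `Bᵀ·J·B` for a rank-2 integer matrix `B` whose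
columns are nonzero and sum to `0`. -/
theorem stmt3 (N : ℕ) (Q : Matrix (Fin N) (Fin N) ℤ)
    (hskew : Qᵀ = -Q)
    (hrank : (Q.map (Int.cast : ℤ → ℚ)).rank = 2)
    (hcol : ∀ j, ∃ i, Q i j ≠ 0)
    (hrow : ∀ i, ∑ j, Q i j = 0) :
    ∃ B : Matrix (Fin 2) (Fin N) ℤ,
      (B.map (Int.cast : ℤ → ℚ)).rank = 2 ∧
      (∀ j, (fun k => B k j) ≠ (0 : Fin 2 → ℤ)) ∧
      (∑ j : Fin N, (fun k => B k j)) = (0 : Fin 2 → ℤ) ∧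
      Q = Bᵀ * Jmat * B := by
  obtain ⟨B, hQB⟩ := exists_eq_transpose_mul_Jmat_mul Q hskew (by omega)
  have hBrank : (B.map (Int.cast : ℤ → ℚ)).rank = 2 := by
    refine le_antisymm (by simpa using rank_le_card_height (B.map (Int.cast : ℤ → ℚ))) ?_
    calc 2 = (Q.map (Int.cast : ℤ → ℚ)).rank := hrank.symm
      _ = ((Bᵀ * Jmat).map (Int.cast : ℤ → ℚ) * B.map (Int.cast : ℤ → ℚ)).rank := by
        rw [hQB]; exact congrArg rank (Matrix.map_mul (f := Int.castRingHom ℚ))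
      _ ≤ _ := rank_mul_le_right _ _
  refine ⟨B, hBrank, fun j hj => ?_, ?_, hQB⟩
  · obtain ⟨i, hij⟩ := hcol j
    apply hij
    rw [hQB, transpose_mul_Jmat_mul_apply]
    simp [show Bᵀ j = 0 from hj]
  · change ∑ j, Bᵀ j = 0
    rw [← mulVec_one]
    refine mulVec_eq_zero_of_transpose_mul_Jmat_mul_mulVec_eq_zero hBrank ?_
    rw [← hQB]
    funext i
    simpa [mulVec, dotProduct] using hrow i
end

section
/- Let b_1,…,b_N ∈ ℤ² be nonzero vectors spanning ℝ² with b_1+…+b_N = 0. Then for any two 2-dimensional cones C and C' of the secondary fan, Σ_{{i,j} ∈ L_C} |det(b_i,b_j)| = Σ_{{i,j} ∈ L_{C'}} |det(b_i,b_j)|. -/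
noncomputable section
open scoped Classical

/-- `det(u,v) = u₁v₂ - v₁u₂` for `u, v ∈ ℝ²`. -/
def det2 (u v : ℝ × ℝ) : ℝ := u.1 * v.2 - v.1 * u.2

/-- The canonical embedding `ℤ² → ℝ²`. -/
def toR2 (v : ℤ × ℤ) : ℝ × ℝ := ((v.1 : ℝ), (v.2 : ℝ))

/-- The ray `ℝ_{≥0}·v`. -/
def rayThru (v : ℝ × ℝ) : Set (ℝ × ℝ) := {x | ∃ t : ℝ, 0 ≤ t ∧ x = t • v}

/-- `C` is a 2-dimensional cone of the secondary fan of `b`. -/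
def IsSecCone {N : ℕ} (b : Fin N → ℝ × ℝ) (C : Set (ℝ × ℝ)) : Prop :=
  ∃ x ∈ (⋃ i, rayThru (b i))ᶜ,
    C = closure (connectedComponentIn ((⋃ i, rayThru (b i))ᶜ) x)

/-- The cone `ℝ_{≥0}·u + ℝ_{≥0}·v`. -/
def posCone (u v : ℝ × ℝ) : Set (ℝ × ℝ) :=
  {x | ∃ s t : ℝ, 0 ≤ s ∧ 0 ≤ t ∧ x = s • u + t • v}

/-- `Σ_{{i,j} ∈ L_C} |det(b i, b j)|`. -/
noncomputable def LCsum {N : ℕ} (b : Fin N → ℝ × ℝ) (C : Set (ℝ × ℝ)) : ℝ :=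
  ∑ i, ∑ j, if i < j ∧ C ⊆ posCone (b i) (b j) then |det2 (b i) (b j)| else 0

/-!
Fix `x` off every line `ℝ b_i` and put `σ_i = sign det(b_i, x)`. Then `x` lies in the cone spanned
by `b_i, b_j` exactly when `σ_i = -σ_j = sign det(b_i, b_j)`, so summing over all pairs and using
`∑ b_i = 0` to kill the terms linear in `σ` gives
`8 Σ_{L_C} |det(b_i, b_j)| = Σ_{i,j} |det(b_i, b_j)| - Σ_{i,j} |det(b_i, b_j)| σ_i σ_j`
for the cone `C` whose interior contains `x`: the interior of `C` avoids the rays, so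
`C ⊆ cone(b_i, b_j)` can be tested at the single point `x`.

It remains to see that the last sum does not depend on `x`. For a second such point `y`, put
`τ_i = sign det(b_i, y)`. The Plücker relation
`det(b_i, b_j) det(x, y) = det(b_i, x) det(b_j, y) - det(b_j, x) det(b_i, y)` and a sign check give
`|det(b_i, b_j)| (σ_i σ_j - τ_i τ_j) |det(x, y)| = det(x, y) (σ_j τ_j - σ_i τ_i) det(b_i, b_j)`,
and the right-hand side sums to zero over `i, j`, again because `∑ b_i = 0`.
-/

open Finset Real

lemma sign_mul_sign_eq_of_mul_eq {p q r s : ℝ} (hp : p ≠ 0) (hq : q ≠ 0) (hr : r ≠ 0)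
    (hs : s ≠ 0) (h : p * s = r * q) : sign p * sign r = sign q * sign s := by
  rcases hp.lt_or_gt with hp | hp <;> rcases hq.lt_or_gt with hq | hq <;>
    rcases hr.lt_or_gt with hr | hr <;> rcases hs.lt_or_gt with hs | hs <;>
    simp only [sign_of_pos, sign_of_neg, *] <;> norm_num <;> nlinarith

lemma abs_mul_sub_mul_mul_sign {p q r s : ℝ} (hp : p ≠ 0) (hq : q ≠ 0) (hr : r ≠ 0)
    (hs : s ≠ 0) :
    |p * s - r * q| * (sign p * sign r - sign q * sign s) =
      (sign r * sign s - sign p * sign q) * (p * s - r * q) := by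
  rcases hp.lt_or_gt with hp | hp <;> rcases hq.lt_or_gt with hq | hq <;>
    rcases hr.lt_or_gt with hr | hr <;> rcases hs.lt_or_gt with hs | hs <;>
    simp only [sign_of_pos, sign_of_neg, *] <;> norm_num <;>
    first
    | rw [abs_of_nonneg (by nlinarith)]; ring1
    | rw [abs_of_nonpos (by nlinarith)]; ring1

lemma ite_mul_nonneg_abs_eq {d a a' : ℝ} (hd : d ≠ 0) (ha : a ≠ 0) (ha' : a' ≠ 0) :
    (if 0 ≤ -a' * d ∧ 0 ≤ a * d then |d| else 0) =
      (|d| + sign a * d - sign a' * d - |d| * (sign a * sign a')) / 4 := by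
  rcases hd.lt_or_gt with hd | hd <;> rcases ha.lt_or_gt with ha | ha <;>
    rcases ha'.lt_or_gt with ha' | ha' <;>
    simp only [sign_of_pos, sign_of_neg, abs_of_pos, abs_of_neg, *] <;>
    split_ifs with h <;>
    first
    | ring1
    | (exfalso; obtain ⟨h1, h2⟩ := h; nlinarith)
    | (exfalso; exact h ⟨by nlinarith, by nlinarith⟩)

lemma det2_swap (u v : ℝ × ℝ) : det2 u v = -det2 v u := by
  simp only [det2]; ring

lemma det2_mul_det2 (u v x y : ℝ × ℝ) :
    det2 u v * det2 x y = det2 u x * det2 v y - det2 v x * det2 u y := by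
  simp only [det2]; ring

lemma continuous_det2_right (u : ℝ × ℝ) : Continuous (det2 u) := by
  unfold det2; fun_prop

lemma continuous_det2_left (v : ℝ × ℝ) : Continuous fun z => det2 z v := by
  unfold det2; fun_prop

lemma det2_self (u : ℝ × ℝ) : det2 u u = 0 := by
  simp only [det2]; ring

lemma posCone_comm (u v : ℝ × ℝ) : posCone u v = posCone v u := by
  ext x
  constructor <;> rintro ⟨s, t, hs, ht, rfl⟩ <;> exact ⟨t, s, ht, hs, add_comm _ _⟩

lemma det2_smul_add_smul (u v : ℝ × ℝ) (s t : ℝ) :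
    det2 (s • u + t • v) v = s * det2 u v ∧ det2 u (s • u + t • v) = t * det2 u v := by
  simp only [det2, Prod.fst_add, Prod.snd_add, Prod.smul_fst, Prod.smul_snd, smul_eq_mul]
  constructor <;> ring

lemma mem_posCone_iff {u v : ℝ × ℝ} (hd : det2 u v ≠ 0) {x : ℝ × ℝ} :
    x ∈ posCone u v ↔ 0 ≤ det2 x v * det2 u v ∧ 0 ≤ det2 u x * det2 u v := by
  constructor
  · rintro ⟨s, t, hs, ht, rfl⟩
    obtain ⟨h1, h2⟩ := det2_smul_add_smul u v s t
    rw [h1, h2]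
    exact ⟨by nlinarith [mul_self_nonneg (det2 u v)], by nlinarith [mul_self_nonneg (det2 u v)]⟩
  · rintro ⟨h1, h2⟩
    refine ⟨det2 x v / det2 u v, det2 u x / det2 u v, ?_, ?_, ?_⟩
    · simpa [pow_two, mul_div_mul_right _ _ hd] using div_nonneg h1 (sq_nonneg (det2 u v))
    · simpa [pow_two, mul_div_mul_right _ _ hd] using div_nonneg h2 (sq_nonneg (det2 u v))
    · have cramer : det2 u v • x = det2 x v • u + det2 u x • v := by
        ext <;> simp only [det2, Prod.fst_add, Prod.snd_add, Prod.smul_fst, Prod.smul_snd,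
          smul_eq_mul] <;> ring
      rw [div_eq_inv_mul, div_eq_inv_mul, mul_smul, mul_smul, ← smul_add, ← cramer, smul_smul,
        inv_mul_cancel₀ hd, one_smul]

lemma isClosed_posCone {u v : ℝ × ℝ} (hd : det2 u v ≠ 0) : IsClosed (posCone u v) := by
  have : posCone u v = {x | 0 ≤ det2 x v * det2 u v} ∩ {x | 0 ≤ det2 u x * det2 u v} := by
    ext x; exact mem_posCone_iff hd
  rw [this]
  exact (isClosed_le continuous_const ((continuous_det2_left v).mul continuous_const)).inter
    (isClosed_le continuous_const ((continuous_det2_right u).mul continuous_const))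

lemma mul_pos_of_mem_posCone {u v x : ℝ × ℝ} (hd : det2 u v ≠ 0) (hx : x ∈ posCone u v)
    (hxu : x ∉ rayThru u) (hxv : x ∉ rayThru v) :
    0 < det2 x v * det2 u v ∧ 0 < det2 u x * det2 u v := by
  obtain ⟨s, t, hs, ht, rfl⟩ := hx
  have hs' : 0 < s := hs.lt_of_ne fun h => hxv ⟨t, ht, by simp [← h]⟩
  have ht' : 0 < t := ht.lt_of_ne fun h => hxu ⟨s, hs, by simp [← h]⟩
  obtain ⟨h1, h2⟩ := det2_smul_add_smul u v s t
  rw [h1, h2, mul_assoc, mul_assoc]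
  exact ⟨mul_pos hs' (mul_self_pos.mpr hd), mul_pos ht' (mul_self_pos.mpr hd)⟩

lemma IsPreconnected.subset_posCone {u v x : ℝ × ℝ} {U : Set (ℝ × ℝ)} (hU : IsPreconnected U)
    (hd : det2 u v ≠ 0) (hUu : Disjoint U (rayThru u)) (hUv : Disjoint U (rayThru v))
    (hxU : x ∈ U) (hx : x ∈ posCone u v) : U ⊆ posCone u v := by
  let V := {z | 0 < det2 z v * det2 u v} ∩ {z | 0 < det2 u z * det2 u v}
  have hV : IsOpen V :=
    (isOpen_lt continuous_const ((continuous_det2_left v).mul continuous_const)).inter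
      (isOpen_lt continuous_const ((continuous_det2_right u).mul continuous_const))
  have hVC : V ⊆ posCone u v := fun z hz => (mem_posCone_iff hd).mpr ⟨hz.1.le, hz.2.le⟩
  have hUV : U ⊆ V ∪ (posCone u v)ᶜ := fun z hz => or_iff_not_imp_right.mpr fun hzC =>
    mul_pos_of_mem_posCone hd (not_not.mp hzC) (hUu.notMem_of_mem_left hz)
      (hUv.notMem_of_mem_left hz)
  exact (hU.subset_left_of_subset_union hV (isClosed_posCone hd).isOpen_compl
    (Set.disjoint_compl_right_iff_subset.mpr hVC) hUV
    ⟨x, hxU, mul_pos_of_mem_posCone hd hx (hUu.notMem_of_mem_left hxU)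
      (hUv.notMem_of_mem_left hxU)⟩).trans hVC

lemma isClosed_rayThru (v : ℝ × ℝ) : IsClosed (rayThru v) := by
  have : rayThru v = (fun t : ℝ => t • v) '' Set.Ici 0 := by
    ext x; simp [rayThru, eq_comm]
  rw [this]
  exact isClosedMap_smul_left v _ isClosed_Ici

lemma dense_setOf_det2_ne_zero {u : ℝ × ℝ} (hu : u ≠ 0) : Dense {z | det2 u z ≠ 0} := by
  let L : ℝ × ℝ →ₗ[ℝ] ℝ := u.1 • LinearMap.snd ℝ ℝ ℝ - u.2 • LinearMap.fst ℝ ℝ ℝ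
  have hL : {z | det2 u z ≠ 0} = (LinearMap.ker L : Set (ℝ × ℝ))ᶜ := by
    ext z; simp [L, det2, sub_eq_zero, mul_comm]
  have hker : LinearMap.ker L ≠ ⊤ := by
    intro h
    have hw : L (-u.2, u.1) = u.1 ^ 2 + u.2 ^ 2 := by
      simp only [L, LinearMap.sub_apply, LinearMap.smul_apply, LinearMap.snd_apply,
        LinearMap.fst_apply, smul_eq_mul]
      ring
    have h1 : u.1 ^ 2 + u.2 ^ 2 = 0 := hw ▸ LinearMap.mem_ker.mp (h ▸ Submodule.mem_top)
    have h2 : u.1 = 0 := by nlinarith [sq_nonneg u.1, sq_nonneg u.2]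
    have h3 : u.2 = 0 := by nlinarith [sq_nonneg u.1, sq_nonneg u.2]
    exact hu (Prod.ext h2 h3)
  rw [hL, ← interior_eq_empty_iff_dense_compl, ← Set.not_nonempty_iff_eq_empty]
  exact fun h => hker ((LinearMap.ker L).eq_top_of_nonempty_interior' h)

lemma exists_forall_det2_ne_zero {ι : Type*} [Finite ι] {b : ι → ℝ × ℝ} (hb : ∀ i, b i ≠ 0)
    {U : Set (ℝ × ℝ)} (hU : IsOpen U) (hne : U.Nonempty) : ∃ x ∈ U, ∀ i, det2 (b i) x ≠ 0 := by
  have hdense : Dense (⋂ i, {z | det2 (b i) z ≠ 0}) :=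
    dense_iInter_of_isOpen (fun i => isOpen_ne_fun (continuous_det2_right _) continuous_const)
      fun i => dense_setOf_det2_ne_zero (hb i)
  obtain ⟨x, hxU, hx⟩ := hdense.inter_open_nonempty U hU hne
  exact ⟨x, hxU, Set.mem_iInter.mp hx⟩

lemma Finset.sum_sum_ite_lt_eq {ι M : Type*} [Fintype ι] [LinearOrder ι] [AddCommMonoid M]
    (f : ι → ι → M) (hf : ∀ i j, f i j = f j i) (hdiag : ∀ i, f i i = 0) :
    ∑ i, ∑ j, f i j = 2 • ∑ i, ∑ j, if i < j then f i j else 0 := by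
  have hsplit : ∀ i j, f i j = (if i < j then f i j else 0) + (if j < i then f i j else 0) := by
    intro i j
    rcases lt_trichotomy i j with h | rfl | h
    · simp [h, h.not_gt]
    · simp [hdiag]
    · simp [h, h.not_gt]
  have hswap : ∑ i, ∑ j, (if j < i then f i j else 0) = ∑ i, ∑ j, if i < j then f i j else 0 := by
    rw [sum_comm]; simp only [hf]
  rw [two_nsmul]
  nth_rw 2 [← hswap]
  simp only [← sum_add_distrib, ← hsplit]

def detSignSum {ι : Type*} [Fintype ι] (b : ι → ℝ × ℝ) (x : ℝ × ℝ) : ℝ :=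
  ∑ i, ∑ j, |det2 (b i) (b j)| * (sign (det2 (b i) x) * sign (det2 (b j) x))

section ZeroSum

variable {ι : Type*} [Fintype ι] {b : ι → ℝ × ℝ}

lemma sum_det2_right (hb : ∑ i, b i = 0) (u : ℝ × ℝ) : ∑ j, det2 u (b j) = 0 := by
  have h := congrArg (det2 u) hb
  simpa [det2, Prod.fst_sum, Prod.snd_sum, mul_sum, sum_mul] using h

lemma sum_det2_left (hb : ∑ i, b i = 0) (v : ℝ × ℝ) : ∑ i, det2 (b i) v = 0 := by
  simp only [det2_swap _ v, sum_neg_distrib, sum_det2_right hb, neg_zero]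

lemma sum_sum_ite_mem_posCone (hb : ∑ i, b i = 0) {x : ℝ × ℝ} (hx : ∀ i, det2 (b i) x ≠ 0) :
    ∑ i, ∑ j, (if x ∈ posCone (b i) (b j) then |det2 (b i) (b j)| else 0) =
      (∑ i, ∑ j, |det2 (b i) (b j)| - detSignSum b x) / 4 := by
  have hterm : ∀ i j, (if x ∈ posCone (b i) (b j) then |det2 (b i) (b j)| else 0) =
      (|det2 (b i) (b j)| + sign (det2 (b i) x) * det2 (b i) (b j)
        - sign (det2 (b j) x) * det2 (b i) (b j)
        - |det2 (b i) (b j)| * (sign (det2 (b i) x) * sign (det2 (b j) x))) / 4 := by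
    intro i j
    rcases eq_or_ne (det2 (b i) (b j)) 0 with hd | hd
    · simp [hd]
    · simp only [mem_posCone_iff hd, det2_swap x (b j)]
      exact ite_mul_nonneg_abs_eq hd (hx i) (hx j)
  have h1 : ∑ i, ∑ j, sign (det2 (b i) x) * det2 (b i) (b j) = 0 := by
    simp only [← mul_sum, sum_det2_right hb, mul_zero, sum_const_zero]
  have h2 : ∑ i, ∑ j, sign (det2 (b j) x) * det2 (b i) (b j) = 0 := by
    rw [sum_comm]
    simp only [← mul_sum, sum_det2_left hb, mul_zero, sum_const_zero]
  simp only [hterm, detSignSum, ← sum_div, sum_sub_distrib, sum_add_distrib, h1, h2]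
  ring

lemma detSignSum_eq (hb : ∑ i, b i = 0) {x y : ℝ × ℝ} (hx : ∀ i, det2 (b i) x ≠ 0)
    (hy : ∀ i, det2 (b i) y ≠ 0) : detSignSum b x = detSignSum b y := by
  by_cases hD : det2 x y = 0
  · refine sum_congr rfl fun i _ => sum_congr rfl fun j _ => ?_
    rw [sign_mul_sign_eq_of_mul_eq (hx i) (hy i) (hx j) (hy j)]
    linear_combination -(det2_mul_det2 (b i) (b j) x y) + det2 (b i) (b j) * hD
  · have hterm : ∀ i j, (|det2 (b i) (b j)| * (sign (det2 (b i) x) * sign (det2 (b j) x))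
        - |det2 (b i) (b j)| * (sign (det2 (b i) y) * sign (det2 (b j) y))) * |det2 x y| =
        det2 x y * (sign (det2 (b j) x) * sign (det2 (b j) y) * det2 (b i) (b j)
          - sign (det2 (b i) x) * sign (det2 (b i) y) * det2 (b i) (b j)) := by
      intro i j
      have key := abs_mul_sub_mul_mul_sign (hx i) (hy i) (hx j) (hy j)
      rw [← det2_mul_det2, abs_mul] at key
      linear_combination key
    have hw1 : ∑ i, ∑ j, sign (det2 (b j) x) * sign (det2 (b j) y) * det2 (b i) (b j) = 0 := by
      rw [sum_comm]
      simp only [← mul_sum, sum_det2_left hb, mul_zero, sum_const_zero]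
    have hw2 : ∑ i, ∑ j, sign (det2 (b i) x) * sign (det2 (b i) y) * det2 (b i) (b j) = 0 := by
      simp only [← mul_sum, sum_det2_right hb, mul_zero, sum_const_zero]
    rw [← sub_eq_zero, ← mul_left_inj' (abs_ne_zero.mpr hD), zero_mul, detSignSum, detSignSum,
      ← sum_sub_distrib, sum_mul]
    simp only [← sum_sub_distrib, sum_mul, hterm, ← mul_sum]
    simp only [sum_sub_distrib, hw1, hw2, sub_self, mul_zero]

end ZeroSum

lemma LCsum_closure_connectedComponentIn {N : ℕ} {b : Fin N → ℝ × ℝ} (hb : ∑ i, b i = 0)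
    {x x' : ℝ × ℝ} (hx' : x' ∈ connectedComponentIn (⋃ i, rayThru (b i))ᶜ x)
    (hgen : ∀ i, det2 (b i) x' ≠ 0) :
    LCsum b (closure (connectedComponentIn (⋃ i, rayThru (b i))ᶜ x)) =
      (∑ i, ∑ j, |det2 (b i) (b j)| - detSignSum b x') / 8 := by
  set U := connectedComponentIn (⋃ i, rayThru (b i))ᶜ x
  have hray : ∀ i, Disjoint U (rayThru (b i)) := fun i => Set.disjoint_left.mpr fun z hz hzi =>
    connectedComponentIn_subset _ _ hz (Set.mem_iUnion.mpr ⟨i, hzi⟩)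
  have hcone : ∀ i j, det2 (b i) (b j) ≠ 0 →
      (closure U ⊆ posCone (b i) (b j) ↔ x' ∈ posCone (b i) (b j)) := fun i j hd =>
    ⟨fun h => h (subset_closure hx'), fun h => closure_minimal
      (isPreconnected_connectedComponentIn.subset_posCone hd (hray i) (hray j) hx' h)
      (isClosed_posCone hd)⟩
  have hLC : LCsum b (closure U) = ∑ i, ∑ j,
      if i < j then (if x' ∈ posCone (b i) (b j) then |det2 (b i) (b j)| else 0) else 0 := by
    refine sum_congr rfl fun i _ => sum_congr rfl fun j _ => ?_
    rw [ite_and]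
    rcases eq_or_ne (det2 (b i) (b j)) 0 with hd | hd
    · simp [hd]
    · rw [if_congr (hcone i j hd) rfl rfl]
  have hhalf := Finset.sum_sum_ite_lt_eq
    (fun i j => if x' ∈ posCone (b i) (b j) then |det2 (b i) (b j)| else 0)
    (fun i j => by rw [posCone_comm, det2_swap, abs_neg]) (fun i => by simp [det2_self])
  rw [sum_sum_ite_mem_posCone hb hgen, two_nsmul] at hhalf
  rw [hLC]
  linarith

lemma toR2_sum {ι : Type*} (s : Finset ι) (f : ι → ℤ × ℤ) :
    toR2 (∑ i ∈ s, f i) = ∑ i ∈ s, toR2 (f i) := by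
  ext <;> simp [toR2, Prod.fst_sum, Prod.snd_sum]

lemma toR2_eq_zero {v : ℤ × ℤ} : toR2 v = 0 ↔ v = 0 := by
  simp [toR2, Prod.ext_iff]

theorem stmt10_general (N : ℕ) (b : Fin N → ℤ × ℤ)
    (hnz : ∀ i, b i ≠ 0)
    (hsum : ∑ i, b i = 0)
    (C C' : Set (ℝ × ℝ))
    (hC : IsSecCone (fun i => toR2 (b i)) C)
    (hC' : IsSecCone (fun i => toR2 (b i)) C') :
    LCsum (fun i => toR2 (b i)) C = LCsum (fun i => toR2 (b i)) C' := by
  have hnz' : ∀ i, toR2 (b i) ≠ 0 := fun i => toR2_eq_zero.not.mpr (hnz i)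
  have hsum' : ∑ i, toR2 (b i) = 0 := by rw [← toR2_sum, hsum, toR2_eq_zero]
  have hΩ : IsOpen (⋃ i, rayThru (toR2 (b i)))ᶜ :=
    (isClosed_iUnion_of_finite fun i => isClosed_rayThru _).isOpen_compl
  obtain ⟨x, hx, rfl⟩ := hC
  obtain ⟨y, hy, rfl⟩ := hC'
  obtain ⟨x', hx', hgx⟩ := exists_forall_det2_ne_zero hnz' hΩ.connectedComponentIn
    ⟨x, mem_connectedComponentIn hx⟩
  obtain ⟨y', hy', hgy⟩ := exists_forall_det2_ne_zero hnz' hΩ.connectedComponentIn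
    ⟨y, mem_connectedComponentIn hy⟩
  rw [LCsum_closure_connectedComponentIn hsum' hx' hgx,
    LCsum_closure_connectedComponentIn hsum' hy' hgy, detSignSum_eq hsum' hgx hgy]

/-- the quantity `Σ_{{i,j} ∈ L_C} |det(b i, b j)|` is the same for
any two 2-dimensional cones `C`, `C'` of the secondary fan. -/
theorem stmt10 (N : ℕ) (b : Fin N → ℤ × ℤ)
    (hnz : ∀ i, b i ≠ 0)
    (hspan : Submodule.span ℝ (Set.range fun i => toR2 (b i)) = ⊤)
    (hsum : ∑ i, b i = 0)
    (C C' : Set (ℝ × ℝ))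
    (hC : IsSecCone (fun i => toR2 (b i)) C)
    (hC' : IsSecCone (fun i => toR2 (b i)) C') :
    LCsum (fun i => toR2 (b i)) C = LCsum (fun i => toR2 (b i)) C' :=
  stmt10_general N b hnz hsum C C' hC hC'
end
end
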